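/- arXiv:2003.12514 — 2 statements merged into one kernel-verified Lean document; each statement's English description precedes it below -/
import Mathlib

section
/- Let T be a left exact comonad on a finite linear category M, X a finite linear category, and F : M → X a left exact functor equipped with a comodule structure over the comonad T* (F ↦ F ∘ T) on Fun^le(M, X). Then the corresponding left exact functor Θ(F) : Comod_T(M) → X can be computed pointwise as the equalizer Θ(F)(z) → F(U z) ⇉ F(T(U z)), where one morphism is induced by the T*-comodule structure of F and the other by the T-comodule structure of z, and U is the forgetful functor. -/
/-!
`Θ(F)` is the equalizer, in the functor category `Comod_T(M) ⥤ X`, of the two natural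
transformations `F ∘ U ⇉ F ∘ T ∘ U`. Limits in functor categories are computed pointwise, which
is the equalizer formula, and limits commute with limits, so `Θ(F)` is left exact. On a cofree
comodule `T m` the fork `F m → F (T m) ⇉ F (T (T m))` is split by `F ε`, so `Θ(F) (T m) ≅ F m`,
naturally in `m` because the split forks assemble into a limit fork of functors.
-/

open CategoryTheory CategoryTheory.Limits

namespace CategoryTheory

lemma preservesLimitsOfShape_limit {J K C D : Type*} [Category J] [Category K] [Category C]
    [Category D] [HasLimitsOfShape K D] (G : K ⥤ C ⥤ D)
    [∀ k, PreservesLimitsOfShape J (G.obj k)] : PreservesLimitsOfShape J (limit G) :=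
  have : PreservesLimitsOfShape J G.flip :=
    preservesLimitsOfShape_of_evaluation _ _ fun k =>
      inferInstanceAs (PreservesLimitsOfShape J (G.obj k))
  preservesLimitsOfShape_of_natIso (limitIsoFlipCompLim G).symm

namespace Comonad

variable {M X : Type*} [Category M] [Category X] (T : Comonad M)

@[simps]
def coaction : T.forget ⟶ T.forget ⋙ T.toFunctor where
  app z := z.a
  naturality _ _ f := f.h.symm

variable {T} {F : M ⥤ X} (ρ : F ⟶ T.toFunctor ⋙ F)

section Extension

variable [HasEqualizers X]

noncomputable def extendAlongCofree : T.Coalgebra ⥤ X :=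
  equalizer (Functor.whiskerLeft T.forget ρ) (Functor.whiskerRight T.coaction F)

noncomputable def extendAlongCofreeι : extendAlongCofree ρ ⟶ T.forget ⋙ F :=
  equalizer.ι _ _

lemma extendAlongCofreeι_app_condition (z : T.Coalgebra) :
    (extendAlongCofreeι ρ).app z ≫ ρ.app z.A = (extendAlongCofreeι ρ).app z ≫ F.map z.a :=
  NatTrans.congr_app (equalizer.condition _ _) z

noncomputable def isLimitExtendAlongCofreeFork (z : T.Coalgebra) :
    IsLimit (Fork.ofι _ (extendAlongCofreeι_app_condition ρ z)) :=
  isLimitForkMapOfIsLimit ((evaluation _ X).obj z) _ (equalizerIsEqualizer _ _)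

instance preservesFiniteLimits_extendAlongCofree [HasFiniteLimits M]
    [PreservesFiniteLimits T.toFunctor] [PreservesFiniteLimits F] : PreservesFiniteLimits (extendAlongCofree ρ) := by
  refine ⟨fun J _ _ => ?_⟩
  have : ∀ k, PreservesLimitsOfShape J (parallelPair (Functor.whiskerLeft T.forget ρ)
      (Functor.whiskerRight T.coaction F) |>.obj k) := by
    rintro (_ | _) <;> dsimp <;> infer_instance
  exact preservesLimitsOfShape_limit _

end Extension

variable (hcounit : ∀ m : M, ρ.app m ≫ F.map (T.ε.app m) = 𝟙 (F.obj m))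
variable (hcoassoc : ∀ m : M,
  ρ.app m ≫ F.map (T.δ.app m) = ρ.app m ≫ ρ.app (T.toFunctor.obj m))

def coactionSplitEqualizer (m : M) :
    IsSplitEqualizer (ρ.app (T.obj m)) (F.map (T.δ.app m)) (ρ.app m) where
  leftRetraction := F.map (T.ε.app m)
  rightRetraction := F.map (T.map (T.ε.app m))
  condition := (hcoassoc m).symm
  ι_leftRetraction := hcounit m
  bottom_rightRetraction := by rw [← F.map_comp, T.right_counit, F.map_id]
  top_rightRetraction := (ρ.naturality (T.ε.app m)).symm

noncomputable def isLimitCoactionFork :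
    IsLimit (Fork.ofι ρ (f := Functor.whiskerLeft T.cofree (Functor.whiskerLeft T.forget ρ))
      (g := Functor.whiskerLeft T.cofree (Functor.whiskerRight T.coaction F))
      (by ext m; exact (hcoassoc m).symm)) :=
  evaluationJointlyReflectsLimits _ fun m =>
    (isLimitMapConeForkEquiv ((evaluation M X).obj m) _).symm
      (coactionSplitEqualizer ρ hcounit hcoassoc m).isEqualizer

noncomputable def cofreeCompExtendAlongCofreeIso [HasEqualizers X] :
    T.cofree ⋙ extendAlongCofree ρ ≅ F :=
  (isLimitForkMapOfIsLimit ((Functor.whiskeringLeft _ _ X).obj T.cofree) _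
    (equalizerIsEqualizer _ _)).conePointUniqueUpToIso (isLimitCoactionFork ρ hcounit hcoassoc)

end Comonad

end CategoryTheory

theorem pointwise_equalizer_for_comodule_functor_general
    {M X : Type*} [Category M] [Category X]
    [Abelian M] [Abelian X]
    (T : Comonad M) [PreservesFiniteLimits T.toFunctor]
    (F : M ⥤ X) [PreservesFiniteLimits F]
    (ρ : F ⟶ T.toFunctor ⋙ F)
    (hcounit : ∀ m : M, ρ.app m ≫ F.map (T.ε.app m) = 𝟙 (F.obj m))
    (hcoassoc : ∀ m : M,
      ρ.app m ≫ F.map (T.δ.app m) = ρ.app m ≫ ρ.app (T.toFunctor.obj m)) :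
    ∃ Θ : T.Coalgebra ⥤ X, Nonempty (PreservesFiniteLimits Θ) ∧
      ∃ ι : Θ ⟶ T.forget ⋙ F,
        (∀ z : T.Coalgebra,
          ∃ w : ι.app z ≫ ρ.app z.A = ι.app z ≫ F.map z.a,
            Nonempty (IsLimit (Fork.ofι (ι.app z) w))) ∧
        Nonempty (T.cofree ⋙ Θ ≅ F) :=
  ⟨Comonad.extendAlongCofree ρ, ⟨inferInstance⟩, Comonad.extendAlongCofreeι ρ,
    fun z => ⟨_, ⟨Comonad.isLimitExtendAlongCofreeFork ρ z⟩⟩,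
    ⟨Comonad.cofreeCompExtendAlongCofreeIso ρ hcounit hcoassoc⟩⟩

/-- **Pointwise equalizer formula for the functor corresponding to a
`T*`-comodule.**
Let `T` be a left exact comonad on a finite linear category `M`, `X` a finite
linear category, and `F : M → X` a left exact functor equipped with a comodule
structure `ρ : F ⟶ F ∘ T` over the comonad `T*` (given by pre-composition with
`T`) on `Fun^le(M, X)`.  Then the corresponding left exact functor
`Θ(F) : Comod_T(M) → X` can be computed pointwise as the equalizer
`Θ(F)(z) → F(U z) ⇉ F(T(U z))`, where one of the parallel morphisms is induced
by the `T*`-comodule structure of `F` and the other by the `T`-comodule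
structure of `z`, and `U` is the forgetful functor; moreover
`F ≅ Θ(F) ∘ coInd_T`. -/
theorem pointwise_equalizer_for_comodule_functor
    (k : Type*) [Field k] {M X : Type*} [Category M] [Category X]
    [Preadditive M] [CategoryTheory.Linear k M] [Abelian M]
    [Preadditive X] [CategoryTheory.Linear k X] [Abelian X]
    (T : Comonad M) [PreservesFiniteLimits T.toFunctor]
    (F : M ⥤ X) [PreservesFiniteLimits F]
    (ρ : F ⟶ T.toFunctor ⋙ F)
    (hcounit : ∀ m : M, ρ.app m ≫ F.map (T.ε.app m) = 𝟙 (F.obj m))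
    (hcoassoc : ∀ m : M,
      ρ.app m ≫ F.map (T.δ.app m) = ρ.app m ≫ ρ.app (T.toFunctor.obj m)) :
    ∃ Θ : T.Coalgebra ⥤ X, Nonempty (PreservesFiniteLimits Θ) ∧
      ∃ ι : Θ ⟶ T.forget ⋙ F,
        (∀ z : T.Coalgebra,
          ∃ w : ι.app z ≫ ρ.app z.A = ι.app z ≫ F.map z.a,
            Nonempty (IsLimit (Fork.ofι (ι.app z) w))) ∧
        Nonempty (T.cofree ⋙ Θ ≅ F) :=
  pointwise_equalizer_for_comodule_functor_general T F ρ hcounit hcoassoc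
end

section
/- Let A, B be finite linear categories and F1 : A → B, F2 : B → A left exact linear functors, with F1 admitting a left adjoint F1^{la}. Then there is an isomorphism of coends ∫^{b∈B} \overline{F1^{la}(b)} ⊠ F2(b) ≅ ∫^{a∈A} \overline{a} ⊠ (F2 ∘ F1)(a) in A^op ⊠ A, where \overline{x} denotes x regarded as an object of the opposite category. -/
open CategoryTheory Opposite

section

variable {k : Type*} [Field k] {A B D : Type*}
  [Category A] [Category B] [Category D]
  (box : Aᵒᵖ ⥤ A ⥤ D)   -- the Deligne product pairing `A^op × A → A^op ⊠ A`
  (F1 : A ⥤ B) (F2 : B ⥤ A) (F1la : B ⥤ A)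

/-- Dinaturality (in `b ∈ B`) of a family
`σ_b : \overline{F1^la(b)} ⊠ F2(b) ⟶ c`, i.e. a cowedge for the coend
`∫^{b ∈ B} \overline{F1^la(b)} ⊠ F2(b)`. -/
def IsCowedgeLa {c : D}
    (σ : ∀ b : B, (box.obj (op (F1la.obj b))).obj (F2.obj b) ⟶ c) : Prop :=
  ∀ {b b' : B} (f : b ⟶ b'),
    (box.map (F1la.map f).op).app (F2.obj b) ≫ σ b =
      (box.obj (op (F1la.obj b'))).map (F2.map f) ≫ σ b'

/-- Dinaturality (in `a ∈ A`) of a family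
`σ_a : \overline{a} ⊠ F2(F1(a)) ⟶ c`, i.e. a cowedge for the coend
`∫^{a ∈ A} \overline{a} ⊠ F2(F1(a))`. -/
def IsCowedgeComp {c : D}
    (σ : ∀ a : A, (box.obj (op a)).obj (F2.obj (F1.obj a)) ⟶ c) : Prop :=
  ∀ {a a' : A} (f : a ⟶ a'),
    (box.map f.op).app (F2.obj (F1.obj a)) ≫ σ a =
      (box.obj (op a')).map (F2.map (F1.map f)) ≫ σ a'

end

/-- **Shifting a left adjoint through an Eilenberg–Watts style coend.**
Let `A` and `B` be finite linear categories and `F1 : A → B`, `F2 : B → A`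
left exact linear functors, with `F1` admitting a left adjoint `F1^la`.
Then there is an isomorphism of coends
`∫^{b ∈ B} \overline{F1^la(b)} ⊠ F2(b) ≅ ∫^{a ∈ A} \overline{a} ⊠ F2(F1(a))`
in `A^op ⊠ A`.  Here the Deligne product `A^op ⊠ A` is modelled by a category
`D` together with the pairing bifunctor `box`, and the two coends are given by
objects `C1`, `C2` equipped with universal dinatural families (cowedges). -/
theorem coend_shift_left_adjoint
    (k : Type*) [Field k] {A B D : Type*}
    [Category A] [Category B] [Category D]
    [Preadditive A] [CategoryTheory.Linear k A] [Abelian A]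
    [Preadditive B] [CategoryTheory.Linear k B] [Abelian B]
    (box : Aᵒᵖ ⥤ A ⥤ D)
    (F1 : A ⥤ B) [Limits.PreservesFiniteLimits F1]
    (F2 : B ⥤ A) [Limits.PreservesFiniteLimits F2]
    (F1la : B ⥤ A) (adj : F1la ⊣ F1)
    -- the coend `C1 = ∫^{b ∈ B} \overline{F1^la(b)} ⊠ F2(b)`
    (C1 : D) (ι1 : ∀ b : B, (box.obj (op (F1la.obj b))).obj (F2.obj b) ⟶ C1)
    (hι1 : IsCowedgeLa box F2 F1la ι1)
    (uniC1 : ∀ (c : D) (σ : ∀ b : B, (box.obj (op (F1la.obj b))).obj (F2.obj b) ⟶ c),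
      IsCowedgeLa box F2 F1la σ → ∃! u : C1 ⟶ c, ∀ b, ι1 b ≫ u = σ b)
    -- the coend `C2 = ∫^{a ∈ A} \overline{a} ⊠ F2(F1(a))`
    (C2 : D) (ι2 : ∀ a : A, (box.obj (op a)).obj (F2.obj (F1.obj a)) ⟶ C2)
    (hι2 : IsCowedgeComp box F1 F2 ι2)
    (uniC2 : ∀ (c : D) (σ : ∀ a : A, (box.obj (op a)).obj (F2.obj (F1.obj a)) ⟶ c),
      IsCowedgeComp box F1 F2 σ → ∃! u : C2 ⟶ c, ∀ a, ι2 a ≫ u = σ a) :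
    Nonempty (C1 ≅ C2) := by
  -- cowedge for C2's universal property, landing in C1
  have hσw : IsCowedgeComp box F1 F2 (fun a =>
      (box.map (adj.counit.app a).op).app (F2.obj (F1.obj a)) ≫ ι1 (F1.obj a)) := by
    intro a a' f
    have hc : adj.counit.app a ≫ f = F1la.map (F1.map f) ≫ adj.counit.app a' := by
      simpa using (adj.counit.naturality f).symm
    have e2 : (box.map (F1la.map (F1.map f)).op).app (F2.obj (F1.obj a)) ≫ ι1 (F1.obj a) =
        (box.obj (op (F1la.obj (F1.obj a')))).map (F2.map (F1.map f)) ≫ ι1 (F1.obj a') :=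
      hι1 (F1.map f)
    have e3 : (box.obj (op a')).map (F2.map (F1.map f)) ≫
        (box.map (adj.counit.app a').op).app (F2.obj (F1.obj a')) =
        (box.map (adj.counit.app a').op).app (F2.obj (F1.obj a)) ≫
        (box.obj (op (F1la.obj (F1.obj a')))).map (F2.map (F1.map f)) :=
      (box.map (adj.counit.app a').op).naturality (F2.map (F1.map f))
    rw [← Category.assoc, ← NatTrans.comp_app, ← box.map_comp, ← op_comp, hc, op_comp,
      box.map_comp, NatTrans.comp_app, Category.assoc, e2, ← Category.assoc, ← e3,
      Category.assoc]
  -- cowedge for C1's universal property, landing in C2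
  have hτw : IsCowedgeLa box F2 F1la (fun b =>
      (box.obj (op (F1la.obj b))).map (F2.map (adj.unit.app b)) ≫ ι2 (F1la.obj b)) := by
    intro b b' f
    have hu' : adj.unit.app b ≫ F1.map (F1la.map f) = f ≫ adj.unit.app b' := by
      simpa using (adj.unit.naturality f).symm
    have e1 : (box.obj (op (F1la.obj b'))).map (F2.map (adj.unit.app b)) ≫
        (box.map (F1la.map f).op).app (F2.obj (F1.obj (F1la.obj b))) =
        (box.map (F1la.map f).op).app (F2.obj b) ≫
        (box.obj (op (F1la.obj b))).map (F2.map (adj.unit.app b)) :=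
      (box.map (F1la.map f).op).naturality (F2.map (adj.unit.app b))
    have e2 : (box.map (F1la.map f).op).app (F2.obj (F1.obj (F1la.obj b))) ≫
        ι2 (F1la.obj b) =
        (box.obj (op (F1la.obj b'))).map (F2.map (F1.map (F1la.map f))) ≫
        ι2 (F1la.obj b') := hι2 (F1la.map f)
    have e3 : (box.obj (op (F1la.obj b'))).map (F2.map (adj.unit.app b)) ≫
        (box.obj (op (F1la.obj b'))).map (F2.map (F1.map (F1la.map f))) =
        (box.obj (op (F1la.obj b'))).map (F2.map f) ≫
        (box.obj (op (F1la.obj b'))).map (F2.map (adj.unit.app b')) := by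
      rw [← Functor.map_comp, ← F2.map_comp, hu', F2.map_comp, Functor.map_comp]
    show (box.map (F1la.map f).op).app (F2.obj b) ≫
        (box.obj (op (F1la.obj b))).map (F2.map (adj.unit.app b)) ≫ ι2 (F1la.obj b) =
      (box.obj (op (F1la.obj b'))).map (F2.map f) ≫
        (box.obj (op (F1la.obj b'))).map (F2.map (adj.unit.app b')) ≫ ι2 (F1la.obj b')
    rw [← Category.assoc, ← e1, Category.assoc, e2, ← Category.assoc, e3, Category.assoc]
  obtain ⟨u, hu, huu⟩ := uniC2 C1 _ hσw
  obtain ⟨v, hv, hvv⟩ := uniC1 C2 _ hτw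
  -- v ≫ u = 𝟙 C1
  have hvu : ∀ b, ι1 b ≫ (v ≫ u) = ι1 b := by
    intro b
    rw [← Category.assoc, hv]
    rw [Category.assoc, hu]
    have e1 : (box.obj (op (F1la.obj b))).map (F2.map (adj.unit.app b)) ≫
        (box.map (adj.counit.app (F1la.obj b)).op).app (F2.obj (F1.obj (F1la.obj b))) =
        (box.map (adj.counit.app (F1la.obj b)).op).app (F2.obj b) ≫
        (box.obj (op (F1la.obj (F1.obj (F1la.obj b))))).map (F2.map (adj.unit.app b)) :=
      (box.map (adj.counit.app (F1la.obj b)).op).naturality (F2.map (adj.unit.app b))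
    have e2 : (box.map (F1la.map (adj.unit.app b)).op).app (F2.obj b) ≫ ι1 b =
        (box.obj (op (F1la.obj (F1.obj (F1la.obj b))))).map (F2.map (adj.unit.app b)) ≫
        ι1 (F1.obj (F1la.obj b)) := hι1 (adj.unit.app b)
    have e3 : (box.map (adj.counit.app (F1la.obj b)).op).app (F2.obj b) ≫
        (box.map (F1la.map (adj.unit.app b)).op).app (F2.obj b) = 𝟙 _ := by
      rw [← NatTrans.comp_app, ← box.map_comp, ← op_comp,
        adj.left_triangle_components b]
      simp
    rw [← Category.assoc, e1, Category.assoc, ← e2, ← Category.assoc, e3]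
    simp
  -- u ≫ v = 𝟙 C2
  have huv : ∀ a, ι2 a ≫ (u ≫ v) = ι2 a := by
    intro a
    rw [← Category.assoc, hu]
    rw [Category.assoc, hv]
    have e1 : (box.obj (op a)).map (F2.map (adj.unit.app (F1.obj a))) ≫
        (box.map (adj.counit.app a).op).app (F2.obj (F1.obj (F1la.obj (F1.obj a)))) =
        (box.map (adj.counit.app a).op).app (F2.obj (F1.obj a)) ≫
        (box.obj (op (F1la.obj (F1.obj a)))).map (F2.map (adj.unit.app (F1.obj a))) :=
      (box.map (adj.counit.app a).op).naturality (F2.map (adj.unit.app (F1.obj a)))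
    have e2 : (box.map (adj.counit.app a).op).app
        (F2.obj (F1.obj (F1la.obj (F1.obj a)))) ≫ ι2 (F1la.obj (F1.obj a)) =
        (box.obj (op a)).map (F2.map (F1.map (adj.counit.app a))) ≫ ι2 a :=
      hι2 (adj.counit.app a)
    have e3 : (box.obj (op a)).map (F2.map (adj.unit.app (F1.obj a))) ≫
        (box.obj (op a)).map (F2.map (F1.map (adj.counit.app a))) = 𝟙 _ := by
      rw [← Functor.map_comp, ← F2.map_comp, adj.right_triangle_components a]
      simp
    rw [← Category.assoc, ← e1, Category.assoc, e2, ← Category.assoc, e3]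
    simp
  obtain ⟨w, hw, hww⟩ := uniC1 C1 ι1 hι1
  have h1 : v ≫ u = 𝟙 C1 := by
    rw [hww (v ≫ u) hvu, hww (𝟙 C1) (fun b => Category.comp_id _)]
  obtain ⟨w2, hw2, hww2⟩ := uniC2 C2 ι2 hι2
  have h2 : u ≫ v = 𝟙 C2 := by
    rw [hww2 (u ≫ v) huv, hww2 (𝟙 C2) (fun a => Category.comp_id _)]
  exact ⟨⟨v, u, h1, h2⟩⟩
end
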